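/- arXiv:1112.0130 — 3 statements merged into one kernel-verified Lean document; each statement's English description precedes it below -/
import Mathlib

section
/- Let R be a discrete Γ-ring (a lax monoidal functor from finite pointed sets to pointed sets with associative unital multiplication μ : R(K) ∧ R(L) → R(K ∧ L)) and let r ∈ R[2] be a formal difference law. Then the element e = p_1^2(r) ∈ R[1] satisfies e · e = 1, where 1 = η(1) is the unit of the monoid R[1]. -/
/-! Basic combinatorics of the category `Γᵒᵖ` of finite pointed sets
`[n] = {0,...,n}` (pointed at `0`), modeled as `Fin (n+1)`. -/

/-- A pointed map `[n] → [m]`. -/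
def PtdMap (n m : ℕ) := {f : Fin (n + 1) → Fin (m + 1) // f 0 = 0}

/-- The identity pointed map. -/
def PtdMap.id (n : ℕ) : PtdMap n n := ⟨fun i => i, rfl⟩

/-- Composition of pointed maps. -/
def PtdMap.comp {n m l : ℕ} (g : PtdMap m l) (f : PtdMap n m) : PtdMap n l :=
  ⟨fun i => g.1 (f.1 i), by show g.1 (f.1 0) = 0; rw [f.2, g.2]⟩

/-- Build a pointed map `[n] → [m]` from a function on `ℕ`
(out-of-range values are sent to the basepoint). -/
def toP (n m : ℕ) (f : ℕ → ℕ) : PtdMap n m :=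
  ⟨fun i => if h : i.val ≠ 0 ∧ 1 ≤ f i.val ∧ f i.val ≤ m then ⟨f i.val, by omega⟩ else 0,
   by simp⟩

/-- The underlying function `ℕ → ℕ` of a pointed map. -/
def PtdMap.toNat {n m : ℕ} (f : PtdMap n m) : ℕ → ℕ :=
  fun x => if h : x ≤ n then (f.1 ⟨x, by omega⟩).val else 0

/-- The `i`-th restriction map `p_i^n : [n] → [n-1]` on `ℕ`-coordinates:
`j ↦ j` for `j < i`, `i ↦ 0`, `j ↦ j - 1` for `j > i`. -/
def pres (i : ℕ) : ℕ → ℕ :=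
  fun j => if j < i then j else if j = i then 0 else j - 1

/-- The summing map `s_{i,j,k}^n : [n] → [n-1]`: it sends both `i` and `j` to `k`
and maps the remaining nonzero elements bijectively onto `[n-1] \ {k}`
preserving order. -/
def ssum (i j k : ℕ) : ℕ → ℕ :=
  fun x =>
    if x = i ∨ x = j then k
    else if x = 0 then 0
    else
      let y := x - ((if i < x then 1 else 0) + (if j < x then 1 else 0))
      if y < k then y else y + 1

/-- The map `d_j^n : [n-1] → [n]`: the order-preserving injection missing `j`. -/
def dskip (j : ℕ) : ℕ → ℕ :=
  fun x => if x = 0 then 0 else if x < j then x else x + 1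

/-- The transposition of `[2]` swapping `1` and `2`. -/
def swap12 : ℕ → ℕ := fun x => if x = 1 then 2 else if x = 2 then 1 else 0

/-- The smash product of maps on `ℕ`-coordinates: under the inverse lexicographic
identification `[n] ∧ [m] ≅ [nm]` (the element `i ∧ j` corresponds to
`(j-1)·n + i`), the smash `f ∧ g` of `f : [n] → [n']` and `g : [m] → [m']` is a
map `[nm] → [n'm']`. -/
def smashNat (n n' : ℕ) (f g : ℕ → ℕ) : ℕ → ℕ :=
  fun c =>
    if c = 0 then 0
    else
      let i := (c - 1) % n + 1
      let j := (c - 1) / n + 1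
      if f i = 0 ∨ g j = 0 then 0 else (g j - 1) * n' + f i

/-- `i ∈ {1,...,2^k}` belongs to `A₊` iff the binary expansion of `i - 1`
has an even number of digits equal to `1`. -/
def inAplus (i : ℕ) : Prop := Even ((Nat.digits 2 (i - 1)).count 1)

/-- A discrete Γ-ring: a functor `R` from finite pointed sets to pointed sets
(with `R[0] = [0]`), together with a unit `1 ∈ R[1]` and an associative, unital
multiplication `μ : R(K) ∧ R(L) → R(K ∧ L)` natural in `K` and `L`, where
`[n] ∧ [m]` is identified with `[nm]` by the inverse lexicographic order. -/
structure DiscreteGammaRing where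
  obj : ℕ → Type
  pt : ∀ n, obj n
  map : ∀ {n m : ℕ}, PtdMap n m → obj n → obj m
  map_id : ∀ (n : ℕ) (x : obj n), map (PtdMap.id n) x = x
  map_comp : ∀ {n m l : ℕ} (f : PtdMap n m) (g : PtdMap m l) (x : obj n),
    map (g.comp f) x = map g (map f x)
  map_pt : ∀ {n m : ℕ} (f : PtdMap n m), map f (pt n) = pt m
  one : obj 1
  mul : ∀ {n m : ℕ}, obj n → obj m → obj (n * m)
  mul_pt_left : ∀ {n m : ℕ} (b : obj m), mul (pt n) b = pt (n * m)
  mul_pt_right : ∀ {n m : ℕ} (a : obj n), mul a (pt m) = pt (n * m)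
  mul_natural : ∀ {n m n' m' : ℕ} (f : PtdMap n n') (g : PtdMap m m')
    (a : obj n) (b : obj m),
    map (toP (n * m) (n' * m') (smashNat n n' f.toNat g.toNat)) (mul a b) =
      mul (map f a) (map g b)
  mul_assoc' : ∀ {n m l : ℕ} (a : obj n) (b : obj m) (c : obj l),
    mul (mul a b) c = (Nat.mul_assoc n m l).symm ▸ mul a (mul b c)
  one_mul' : ∀ {n : ℕ} (a : obj n), mul one a = (Nat.one_mul n).symm ▸ a
  mul_one' : ∀ {n : ℕ} (a : obj n), mul a one = (Nat.mul_one n).symm ▸ a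

/-- The `k`-th smash power `r^k ∈ R[2^k]` of an element `r ∈ R[2]`
(with `r^0` the unit). -/
def DiscreteGammaRing.rpow (R : DiscreteGammaRing) (r : R.obj 2) : (k : ℕ) → R.obj (2 ^ k)
  | 0 => R.one
  | k + 1 => R.mul (R.rpow r k) r

/-- A formal difference law in a discrete Γ-ring `R`: an element `r ∈ R[2]` with
(1) `p_2^2(r) = 1` and `s_{1,2,1}^2(r) = 0`;
(2) `p_1^2(r)·r = r·p_1^2(r) = σ(r)` for the transposition `σ` of `[2]`;
(3) every power `r^k ∈ R[2^k]` is fixed under the special action of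
    `Σ_{2^{k-1}} × Σ_{2^{k-1}}` (pointed bijections of `[2^k]` preserving the
    parity classes `A₊` and `A₋`);
(4) for `i < j` of opposite parity type and any `l`,
    `s_{i,j,l}^{2^k}(r^k) = d_l^{2^k-1} p_i^{2^k-1} p_j^{2^k}(r^k)`. -/
def IsFormalDifferenceLaw (R : DiscreteGammaRing) (r : R.obj 2) : Prop :=
  R.map (toP 2 1 (pres 2)) r = R.one ∧
  R.map (toP 2 1 (ssum 1 2 1)) r = R.pt 1 ∧
  R.mul (R.map (toP 2 1 (pres 1)) r) r = R.map (toP 2 2 swap12) r ∧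
  R.mul r (R.map (toP 2 1 (pres 1)) r) = R.map (toP 2 2 swap12) r ∧
  (∀ (k : ℕ) (g : PtdMap (2 ^ k) (2 ^ k)), Function.Bijective g.1 →
    (∀ i : Fin (2 ^ k + 1), i ≠ 0 → (inAplus i.val ↔ inAplus (g.1 i).val)) →
    R.map g (R.rpow r k) = R.rpow r k) ∧
  (∀ k i j l : ℕ, 1 ≤ i → i < j → j ≤ 2 ^ k → 1 ≤ l → l ≤ 2 ^ k - 1 →
    ¬(inAplus i ↔ inAplus j) →
    R.map (toP (2 ^ k) (2 ^ k - 1) (ssum i j l)) (R.rpow r k) =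
      R.map (toP (2 ^ k - 2) (2 ^ k - 1) (dskip l))
        (R.map (toP (2 ^ k - 1) (2 ^ k - 2) (pres i))
          (R.map (toP (2 ^ k) (2 ^ k - 1) (pres j)) (R.rpow r k))))

/-- If `r ∈ R[2]` is a formal difference law in a discrete Γ-ring `R`, then the
element `e = p_1^2(r) ∈ R[1]` satisfies `e · e = 1` (where `1 = η(1)` is the
unit of the monoid `R[1]`, and the product is formed via
`μ : R[1] ∧ R[1] → R[1]`). -/
theorem minus_one_squared (R : DiscreteGammaRing) (r : R.obj 2)
    (h : IsFormalDifferenceLaw R r) :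
    R.mul (R.map (toP 2 1 (pres 1)) r) (R.map (toP 2 1 (pres 1)) r) = R.one := by
  obtain ⟨h1, -, h3, -, -, -⟩ := h
  have hnat := R.mul_natural (PtdMap.id 1) (toP 2 1 (pres 1))
    (R.map (toP 2 1 (pres 1)) r) r
  have hmap : toP (1 * 2) (1 * 1)
      (smashNat 1 1 (PtdMap.id 1).toNat (toP 2 1 (pres 1)).toNat) = toP 2 1 (pres 1) := by
    apply Subtype.ext
    funext i
    fin_cases i <;> decide
  rw [hmap, R.map_id, h3] at hnat
  rw [← hnat, ← R.map_comp]
  have hmap2 : (toP 2 1 (pres 1)).comp (toP 2 2 swap12) = toP 2 1 (pres 2) := by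
    apply Subtype.ext
    funext i
    fin_cases i <;> decide
  rw [hmap2, h1]
end

section
/- Let R be a discrete Γ-ring and r ∈ R[2] a formal difference law. Define w = p_2^3 ∘ p_2^4 (r·r) ∈ R[2], where r·r ∈ R[4]. Then p_1^2(w) = 1 and p_2^2(w) = 1. -/
instance (n m : ℕ) : DecidableEq (PtdMap n m) := by unfold PtdMap; infer_instance

/-- Let `r ∈ R[2]` be a formal difference law in a discrete Γ-ring `R`, and let
`w = p_2^3 ∘ p_2^4 (r·r) ∈ R[2]` (where `r·r ∈ R[4]`).  Then
`p_1^2(w) = 1` and `p_2^2(w) = 1`. -/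
theorem sum_law_restrictions (R : DiscreteGammaRing) (r : R.obj 2)
    (h : IsFormalDifferenceLaw R r) :
    R.map (toP 2 1 (pres 1))
        (R.map (toP 3 2 (pres 2)) (R.map (toP 4 3 (pres 2)) (R.mul r r))) = R.one ∧
    R.map (toP 2 1 (pres 2))
        (R.map (toP 3 2 (pres 2)) (R.map (toP 4 3 (pres 2)) (R.mul r r))) = R.one := by
  obtain ⟨h1, h2, h3, h4, h5, h6⟩ := h
  constructor
  · -- first goal: composite = smash of p1 ∧ p1
    rw [← R.map_comp, ← R.map_comp]
    have e1 : (((toP 2 1 (pres 1)).comp (toP 3 2 (pres 2))).comp (toP 4 3 (pres 2))) =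
        toP (2 * 2) (1 * 1)
          (smashNat 2 1 (toP 2 1 (pres 1)).toNat (toP 2 1 (pres 1)).toNat) := by decide
    rw [e1, R.mul_natural]
    -- now use mul r (p1 r) = σ r, mapped down by p1 ∧ id
    have B := congrArg
      (R.map (toP (2 * 1) (1 * 1)
        (smashNat 2 1 (toP 2 1 (pres 1)).toNat (PtdMap.id 1).toNat))) h4
    rw [R.mul_natural (toP 2 1 (pres 1)) (PtdMap.id 1) r (R.map (toP 2 1 (pres 1)) r),
      R.map_id, ← R.map_comp] at B
    have e2 : ((toP (2 * 1) (1 * 1)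
        (smashNat 2 1 (toP 2 1 (pres 1)).toNat (PtdMap.id 1).toNat)).comp
          (toP 2 2 swap12)) = toP 2 1 (pres 2) := by decide
    rw [e2, h1] at B
    exact B
  · rw [← R.map_comp, ← R.map_comp]
    have e1 : (((toP 2 1 (pres 2)).comp (toP 3 2 (pres 2))).comp (toP 4 3 (pres 2))) =
        toP (2 * 2) (1 * 1)
          (smashNat 2 1 (toP 2 1 (pres 2)).toNat (toP 2 1 (pres 2)).toNat) := by decide
    rw [e1, R.mul_natural, h1]
    exact (R.one_mul' R.one).trans rfl
end

section
/- Let R be a discrete Γ-ring and r ∈ R[2] a formal difference law. Then w = p_2^3 ∘ p_2^4 (r·r) ∈ R[2] is invariant under the action of the transposition σ ∈ Σ_2 on R[2]: σ(w) = w. -/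

instance : DecidablePred inAplus := fun i => by
  unfold inAplus; infer_instance

/-- The transposition `(1 4)` of `[4]`. -/
def t14 : PtdMap 4 4 := toP 4 4 (fun x => if x = 1 then 4 else if x = 4 then 1 else x)

lemma t14_bij : Function.Bijective t14.1 := by decide

lemma t14_aplus : ∀ i : Fin (2 ^ 2 + 1), i ≠ 0 → (inAplus i.val ↔ inAplus (t14.1 i).val) := by
  intro i hi
  fin_cases i
  · exact absurd rfl hi
  all_goals norm_num [t14, toP, inAplus]

lemma comp_eq :
    (((toP 2 2 swap12).comp (toP 3 2 (pres 2))).comp (toP 4 3 (pres 2))) =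
      (((toP 3 2 (pres 2)).comp (toP 4 3 (pres 2))).comp t14) := by
  apply Subtype.ext; funext i
  revert i; decide

lemma rpow_two (R : DiscreteGammaRing) (r : R.obj 2) : R.rpow r 2 = R.mul r r := by
  show R.mul (R.mul R.one r) r = R.mul r r
  rw [R.one_mul']

/-- Let `r ∈ R[2]` be a formal difference law in a discrete Γ-ring `R`.  Then
`w = p_2^3 ∘ p_2^4 (r·r) ∈ R[2]` is invariant under the action of the
transposition `σ ∈ Σ_2` on `R[2]`: `σ(w) = w`. -/
theorem sum_law_symmetric (R : DiscreteGammaRing) (r : R.obj 2)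
    (h : IsFormalDifferenceLaw R r) :
    R.map (toP 2 2 swap12)
        (R.map (toP 3 2 (pres 2)) (R.map (toP 4 3 (pres 2)) (R.mul r r))) =
      R.map (toP 3 2 (pres 2)) (R.map (toP 4 3 (pres 2)) (R.mul r r)) := by
  obtain ⟨h1, h2, h3, h4, h5, h6⟩ := h
  have ht : R.map t14 (R.mul r r) = R.mul r r := by
    have := h5 2 t14 t14_bij t14_aplus
    rwa [rpow_two] at this
  rw [← R.map_comp, ← R.map_comp, comp_eq, R.map_comp, ht, R.map_comp]
end
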